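/- Let n ≥ 5 and let k₁,…,kₙ ∈ ℝ with H = (1/n)∑kᵢ > 0 and n²H² ≥ ∑kᵢ². Then for any real numbers ρ₁,…,ρₙ, H·∑ρᵢ² - (2/(n(n-1)))·∑ᵢ(nH - kᵢ)ρᵢ² ≥ 0. -/
import Mathlib


open Finset

theorem stmt_11 (n : ℕ) (hn : 5 ≤ n) (k : Fin n → ℝ)
    (H : ℝ) (hH : H = (1 / (n : ℝ)) * ∑ i, k i)
    (hHpos : 0 < H)
    (hGauss : (n : ℝ) ^ 2 * H ^ 2 ≥ ∑ i, (k i) ^ 2)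
    (ρ : Fin n → ℝ) :
    H * ∑ i, (ρ i) ^ 2
      - (2 / ((n : ℝ) * ((n : ℝ) - 1))) * ∑ i, ((n : ℝ) * H - k i) * (ρ i) ^ 2 ≥ 0 := by
  have hn5 : (5 : ℝ) ≤ (n : ℝ) := by exact_mod_cast hn
  have hk : ∀ i, (k i) ^ 2 ≤ ((n : ℝ) * H) ^ 2 := by
    intro i
    have h1 : (k i) ^ 2 ≤ ∑ j, (k j) ^ 2 :=
      Finset.single_le_sum (fun j _ => sq_nonneg (k j)) (Finset.mem_univ i)
    nlinarith [hGauss]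
  have hklow : ∀ i, -((n : ℝ) * H) ≤ k i := by
    intro i
    nlinarith [hk i, mul_pos (by linarith : (0:ℝ) < (n:ℝ)) hHpos]
  have hc : (0 : ℝ) < (n : ℝ) * ((n : ℝ) - 1) := by nlinarith
  rw [Finset.mul_sum, Finset.mul_sum, ← Finset.sum_sub_distrib]
  apply Finset.sum_nonneg
  intro i _
  have hcoef : 0 ≤ H - 2 / ((n : ℝ) * ((n : ℝ) - 1)) * ((n : ℝ) * H - k i) := by
    rw [sub_nonneg, div_mul_eq_mul_div, div_le_iff₀ hc]
    nlinarith [hklow i, mul_nonneg hHpos.le (by nlinarith : (0:ℝ) ≤ (n:ℝ)^2 - 5*(n:ℝ))]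
  nlinarith [mul_nonneg hcoef (sq_nonneg (ρ i))]
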